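/- arXiv:1708.00825 — 3 statements merged into one kernel-verified Lean document; each statement's English description precedes it below -/
import Mathlib

section
/- If N is a normal subgroup of a finite group G, then λ(G/N) ≤ λ(G) ≤ λ(G/N) + λ(N), where λ denotes the depth. -/
/-- An unrefinable chain of length `t`: a descending chain of subgroups from `⊤` to `⊥`
in which each term is a maximal subgroup of the previous one. -/
def IsUnrefinableChain {G : Type*} [Group G] {t : ℕ} (s : Fin (t + 1) → Subgroup G) : Prop :=
  s 0 = ⊤ ∧ s (Fin.last t) = ⊥ ∧ ∀ i : Fin t, s i.succ ⋖ s i.castSucc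

/-- The depth `λ(G)`: the minimal length of an unrefinable chain from `G` to `1`. -/
noncomputable def groupDepth (G : Type*) [Group G] : ℕ :=
  sInf {t | ∃ s : Fin (t + 1) → Subgroup G, IsUnrefinableChain s}

/-- The length `l(G)`: the maximal length of a strictly descending chain of subgroups
from `G` to `1`. -/
noncomputable def groupLength (G : Type*) [Group G] : ℕ :=
  sSup {t | ∃ s : Fin (t + 1) → Subgroup G,
    s 0 = ⊤ ∧ s (Fin.last t) = ⊥ ∧ ∀ i : Fin t, s i.succ < s i.castSucc}

/-- `Ω n`: the number of prime factors of `n` counted with multiplicity. -/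
def Omega (n : ℕ) : ℕ := (Nat.primeFactorsList n).length

/-!
A chain of maximal subgroups of `G` maps to a chain of `G/N` in which every step is either a
maximal inclusion or an equality, so `λ(G/N) ≤ λ(G)`. Conversely, the preimage of an unrefinable
chain of `G/N` is an unrefinable chain from `G` down to `N`, and an unrefinable chain of `N`
continues it down to `1`, so `λ(G) ≤ λ(G/N) + λ(N)`.
-/

section CoverRel

variable {α β : Type*} [PartialOrder α] [PartialOrder β]

variable (α) in
/-- Relation series of `coverRel α` are descending covering chains, so those of
`coverRel (Subgroup G)` from `⊤` to `⊥` are exactly the unrefinable chains of `G`. -/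
def coverRel : SetRel α α := {p | p.2 ⋖ p.1}

theorem RelSeries.exists_coverRel_map_of_covBy_or_eq {f : α → β}
    (hf : ∀ ⦃a b : α⦄, a ⋖ b → f a ⋖ f b ∨ f a = f b) (p : RelSeries (coverRel α)) :
    ∃ q : RelSeries (coverRel β),
      q.head = f p.head ∧ q.last = f p.last ∧ q.length ≤ p.length := by
  induction p using RelSeries.inductionOn with
  | singleton x => exact ⟨.singleton _ (f x), rfl, rfl, le_rfl⟩
  | cons p x hx ih =>
    obtain ⟨q, hq0, hql, hq⟩ := ih
    rcases hf hx with hcov | heq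
    · exact ⟨q.cons (f x) (hq0 ▸ hcov), rfl, by simpa using hql, by simpa using hq⟩
    · refine ⟨q, hq0.trans heq, by simpa using hql, ?_⟩
      rw [RelSeries.cons_length]
      omega

theorem exists_relSeries_coverRel_bot [WellFoundedLT α] [IsStronglyCoatomic α] [OrderBot α]
    (x : α) : ∃ p : RelSeries (coverRel α), p.head = x ∧ p.last = ⊥ := by
  induction x using WellFoundedLT.induction with
  | ind x ih =>
    rcases eq_bot_or_bot_lt x with rfl | hx
    · exact ⟨.singleton _ ⊥, rfl, rfl⟩
    · obtain ⟨y, -, hy⟩ := exists_le_covBy_of_lt hx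
      obtain ⟨p, hp0, hpl⟩ := ih y hy.lt
      exact ⟨p.cons x (hp0 ▸ hy), rfl, by simpa using hpl⟩

end CoverRel

namespace Subgroup

variable {G H : Type*} [Group G] [Group H]

/-- A subgroup `M` strictly between the images would give `a ≤ M.comap f ⊓ b ≤ b`, and either
equality contradicts the choice of `M`. -/
theorem map_covBy_or_eq (f : G →* H) {a b : Subgroup G} (hab : a ⋖ b) :
    a.map f ⋖ b.map f ∨ a.map f = b.map f := by
  refine (map_mono (f := f) hab.le).eq_or_lt.symm.imp (fun hlt => ⟨hlt, fun M haM hMb => ?_⟩) id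
  have ha : a ≤ M.comap f ⊓ b := le_inf (map_le_iff_le_comap.mp haM.le) hab.le
  rcases ha.eq_or_lt with heq | hlt'
  · refine haM.not_ge fun m hm => ?_
    obtain ⟨g, hg, rfl⟩ := hMb.le hm
    exact ⟨g, heq ▸ ⟨hm, hg⟩, rfl⟩
  · have hb : b ≤ M.comap f :=
      (eq_of_le_of_not_lt inf_le_right (hab.2 hlt')).ge.trans inf_le_left
    exact hMb.not_ge (map_le_iff_le_comap.mpr hb)

theorem comap_covBy_comap {f : G →* H} (hf : Function.Surjective f) {a b : Subgroup H}
    (hab : a ⋖ b) : a.comap f ⋖ b.comap f := by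
  let e : Subgroup H ↪o Subgroup G :=
    OrderEmbedding.ofMapLEIff (comap f) fun _ _ => comap_le_comap_of_surjective hf
  refine hab.image e ⟨fun K hK L hL M hM => ?_⟩
  obtain ⟨K, rfl⟩ := hK
  exact ⟨M.map f, comap_map_eq_self ((ker_le_comap f K).trans hM.1)⟩

theorem map_covBy_map {f : G →* H} (hf : Function.Injective f) {a b : Subgroup G}
    (hab : a ⋖ b) : a.map f ⋖ b.map f := by
  let e : Subgroup G ↪o Subgroup H :=
    OrderEmbedding.ofMapLEIff (map f) fun _ _ => map_le_map_iff_of_injective hf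
  refine hab.image e ⟨fun K hK L hL M hM => ?_⟩
  obtain ⟨L, rfl⟩ := hL
  exact ⟨M.comap f, map_comap_eq_self (hM.2.trans (map_le_range f L))⟩

end Subgroup

section Depth

variable {G H : Type*} [Group G] [Group H]

theorem groupDepth_le_length {p : RelSeries (coverRel (Subgroup G))} (h0 : p.head = ⊤)
    (hl : p.last = ⊥) : groupDepth G ≤ p.length :=
  Nat.sInf_le ⟨p.toFun, h0, hl, p.step⟩

theorem exists_relSeries_length_eq_groupDepth [Finite G] :
    ∃ p : RelSeries (coverRel (Subgroup G)),
      p.head = ⊤ ∧ p.last = ⊥ ∧ p.length = groupDepth G := by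
  obtain ⟨p, h0, hl⟩ := exists_relSeries_coverRel_bot (⊤ : Subgroup G)
  have hne : {t | ∃ s : Fin (t + 1) → Subgroup G, IsUnrefinableChain s}.Nonempty :=
    ⟨p.length, p.toFun, h0, hl, p.step⟩
  obtain ⟨s, hs0, hsl, hs⟩ := Nat.sInf_mem hne
  exact ⟨⟨_, s, hs⟩, hs0, hsl, rfl⟩

theorem groupDepth_le_of_surjective [Finite G] {f : G →* H} (hf : Function.Surjective f) :
    groupDepth H ≤ groupDepth G := by
  obtain ⟨p, hp0, hpl, hp⟩ := exists_relSeries_length_eq_groupDepth (G := G)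
  obtain ⟨q, hq0, hql, hq⟩ :=
    p.exists_coverRel_map_of_covBy_or_eq fun _ _ => Subgroup.map_covBy_or_eq f
  rw [hp0, ← MonoidHom.range_eq_map, MonoidHom.range_eq_top_of_surjective f hf] at hq0
  rw [hpl, Subgroup.map_bot] at hql
  exact hp ▸ (groupDepth_le_length hq0 hql).trans hq

theorem groupDepth_le_add_of_surjective [Finite G] {f : G →* H} (hf : Function.Surjective f) :
    groupDepth G ≤ groupDepth H + groupDepth f.ker := by
  have : Finite H := Finite.of_surjective f hf
  obtain ⟨p, hp0, hpl, hp⟩ := exists_relSeries_length_eq_groupDepth (G := H)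
  obtain ⟨q, hq0, hql, hq⟩ := exists_relSeries_length_eq_groupDepth (G := f.ker)
  obtain ⟨p', hp'0, hp'l, hp'⟩ :=
    p.exists_coverRel_map_of_covBy_or_eq fun _ _ h => .inl (Subgroup.comap_covBy_comap hf h)
  obtain ⟨q', hq'0, hq'l, hq'⟩ := q.exists_coverRel_map_of_covBy_or_eq fun _ _ h =>
    .inl (Subgroup.map_covBy_map f.ker.subtype_injective h)
  rw [hp0, Subgroup.comap_top] at hp'0
  rw [hpl, MonoidHom.comap_bot] at hp'l
  rw [hq0, ← MonoidHom.range_eq_map, Subgroup.range_subtype] at hq'0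
  rw [hql, Subgroup.map_bot] at hq'l
  calc groupDepth G ≤ (p'.smash q' (hp'l.trans hq'0.symm)).length :=
        groupDepth_le_length (by rwa [RelSeries.head_smash]) (by rwa [RelSeries.last_smash])
    _ ≤ groupDepth H + groupDepth f.ker := by
        rw [RelSeries.smash_length, ← hp, ← hq]; exact add_le_add hp' hq'

end Depth

theorem depth_quotient_le_depth_le_add (G : Type*) [Group G] [Finite G]
    (N : Subgroup G) [N.Normal] :
    groupDepth (G ⧸ N) ≤ groupDepth G ∧
      groupDepth G ≤ groupDepth (G ⧸ N) + groupDepth ↥N := by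
  have hf := QuotientGroup.mk'_surjective N
  refine ⟨groupDepth_le_of_surjective hf, ?_⟩
  have h := groupDepth_le_add_of_surjective hf
  rwa [QuotientGroup.ker_mk'] at h
end

section
/- Suppose a finite group G has depth 2 and M is a maximal subgroup of G of prime order. Then either M is normal in G, or there is a normal subgroup N of G with G = NM and M acting fixed-point-freely on N by conjugation (i.e., G is a Frobenius group NM). -/
/-!
A maximal subgroup `M` that is not normal is its own normalizer. If `M` has prime order `p`, it
is therefore a Sylow `p`-subgroup (otherwise `G` would be a `p`-group, hence nilpotent, and its
maximal subgroups normal) which is abelian and self-normalizing, so Burnside's transfer theorem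
gives a normal complement `N`. Every `m ≠ 1` in `M` generates `M`, so its centralizer is the
centralizer of `M`, which lies in the normalizer `M`; a fixed point of `m` in `N` thus lies in
`N ∩ M = 1`.
-/

namespace Subgroup

variable {G : Type*} [Group G] {M : Subgroup G}

theorem normalizer_eq_self_of_covBy_top (hM : M ⋖ ⊤) (hnorm : ¬M.Normal) :
    normalizer (M : Set G) = M :=
  (hM.eq_or_eq le_normalizer le_top).resolve_right (mt normalizer_eq_top_iff.mp hnorm)

theorem centralizer_eq_self_of_normalizer_eq_self [IsMulCommutative M]
    (h : normalizer (M : Set G) = M) : centralizer (M : Set G) = M :=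
  le_antisymm ((centralizer_le_normalizer _).trans h.le) (le_centralizer M)

theorem zpowers_eq_of_prime_card (hp : (Nat.card M).Prime) {m : G} (hm : m ∈ M) (hm1 : m ≠ 1) :
    zpowers m = M := by
  have horder : orderOf m = Nat.card M :=
    (hp.eq_one_or_self_of_dvd _ (M.orderOf_dvd_natCard hm)).resolve_left
      (mt orderOf_eq_one_iff.mp hm1)
  have : Finite M := Nat.finite_of_card_ne_zero hp.ne_zero
  exact eq_of_le_of_card_ge (zpowers_le.mpr hm) (by rw [Nat.card_zpowers, horder])

theorem exists_sylow_eq_of_covBy_top [Finite G] {p : ℕ} [Fact p.Prime] (hMp : IsPGroup p M)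
    (hM : M ⋖ ⊤) (hnorm : ¬M.Normal) : ∃ P : Sylow p G, (P : Subgroup G) = M := by
  obtain ⟨P, hMP⟩ := hMp.exists_le_sylow
  refine ⟨P, (hM.eq_or_eq hMP le_top).resolve_right fun hP => hnorm ?_⟩
  have hG : IsPGroup p G := (hP ▸ P.isPGroup').of_equiv topEquiv
  have := hG.isNilpotent
  exact NormalizerCondition.normal_of_coatom M Group.normalizerCondition_of_isNilpotent hM.isCoatom

theorem centralizer_singleton_eq_of_normalizer_eq_self (h : normalizer (M : Set G) = M)
    (hp : (Nat.card M).Prime) {m : G} (hm : m ∈ M) (hm1 : m ≠ 1) : centralizer {m} = M := by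
  have : IsCyclic M := isCyclic_of_prime_card (hp := ⟨hp⟩) rfl
  rw [← centralizer_closure, ← zpowers_eq_closure, zpowers_eq_of_prime_card hp hm hm1,
    centralizer_eq_self_of_normalizer_eq_self h]

theorem exists_normal_isComplement'_of_covBy_top [Finite G] (hM : M ⋖ ⊤) (hnorm : ¬M.Normal)
    (hp : (Nat.card M).Prime) : ∃ N : Subgroup G, N.Normal ∧ IsComplement' N M := by
  have := Fact.mk hp
  have : IsCyclic M := isCyclic_of_prime_card rfl
  obtain ⟨P, hPM⟩ := exists_sylow_eq_of_covBy_top (IsPGroup.of_card (pow_one _).symm) hM hnorm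
  have hself := normalizer_eq_self_of_covBy_top hM hnorm
  have hburnside : normalizer (P : Set G) ≤ centralizer (P : Set G) := by
    rw [show (P : Set G) = M from congrArg SetLike.coe hPM, hself,
      centralizer_eq_self_of_normalizer_eq_self hself]
  exact ⟨_, MonoidHom.normal_ker _,
    congrArg (IsComplement' _) hPM ▸ MonoidHom.ker_transferSylow_isComplement' P hburnside⟩

end Subgroup

theorem normal_or_frobenius_of_depth_two_general (G : Type*) [Group G] [Finite G]
    (M : Subgroup G) (hM : M ⋖ ⊤)
    (hp : (Nat.card M).Prime) :
    M.Normal ∨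
      ∃ N : Subgroup G, N.Normal ∧ N ⊔ M = ⊤ ∧
        ∀ m ∈ M, m ≠ 1 → ∀ n ∈ N, m * n * m⁻¹ = n → n = 1 := by
  by_cases hnorm : M.Normal
  · exact Or.inl hnorm
  obtain ⟨N, hN, hNM⟩ := Subgroup.exists_normal_isComplement'_of_covBy_top hM hnorm hp
  refine Or.inr ⟨N, hN, hNM.sup_eq_top, fun m hm hm1 n hn hfix => ?_⟩
  have hself := Subgroup.normalizer_eq_self_of_covBy_top hM hnorm
  have hnM : n ∈ M := Subgroup.centralizer_singleton_eq_of_normalizer_eq_self hself hp hm hm1 ▸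
    Subgroup.mem_centralizer_singleton_iff.mpr (mul_inv_eq_iff_eq_mul.mp hfix).symm
  exact Subgroup.disjoint_def.mp hNM.disjoint hn hnM

theorem normal_or_frobenius_of_depth_two (G : Type*) [Group G] [Finite G]
    (hdepth : groupDepth G = 2) (M : Subgroup G) (hM : M ⋖ ⊤)
    (hp : (Nat.card M).Prime) :
    M.Normal ∨
      ∃ N : Subgroup G, N.Normal ∧ N ⊔ M = ⊤ ∧
        ∀ m ∈ M, m ≠ 1 → ∀ n ∈ N, m * n * m⁻¹ = n → n = 1 :=
  normal_or_frobenius_of_depth_two_general G M hM hp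
end

section
/- If G is a finite supersolvable group, then λ(G) = l(G); that is, every unrefinable chain of subgroups from G to 1 has the same length. In particular, for a supersolvable group G, every maximal subgroup has prime index and λ(G) = Ω(|G|). -/
/-- A group is supersolvable if it has a chain of normal subgroups from the trivial
subgroup to the whole group in which each successive quotient is cyclic (i.e. each term
is generated by the previous term together with one further element). -/
def IsSupersolvable (G : Type*) [Group G] : Prop :=
  ∃ (n : ℕ) (s : Fin (n + 1) → Subgroup G), s 0 = ⊥ ∧ s (Fin.last n) = ⊤ ∧
    (∀ i, (s i).Normal) ∧
    ∀ i : Fin n, s i.castSucc ≤ s i.succ ∧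
      ∃ g : G, s i.succ = s i.castSucc ⊔ Subgroup.zpowers g

/-!
For a maximal subgroup `M`, let `B = A ⊔ ⟨g⟩` be the first term of the supersolvable series
not contained in `M`. As `B / A` is abelian and `M ⊔ B = ⊤`, the subgroup `M ⊓ B` is normal,
and modulo it the image of `B` is a normal cyclic subgroup meeting `M` trivially. All its
subgroups are normal, so by maximality one of prime order `p` (Cauchy) complements `M`:
`[G : M] = p`.

Supersolvability passes to subgroups, so along an unrefinable chain each step has prime relative
index and `Ω [G : ·]` grows by exactly one, whereas along any strict chain it grows by at least
one. It runs from `Ω 1 = 0` to `Ω |G|`.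
-/

open scoped commutatorElement ArithmeticFunction.Omega
open ArithmeticFunction

theorem Fin.exists_castSucc_and_not_succ {n : ℕ} {P : Fin (n + 1) → Prop} (h0 : P 0)
    (hlast : ¬P (Fin.last n)) : ∃ i : Fin n, P i.castSucc ∧ ¬P i.succ := by
  by_contra! h
  exact hlast (Fin.induction (motive := P) h0 h _)

theorem Fin.add_le_of_forall_lt_succ {t : ℕ} {f : Fin (t + 1) → ℕ}
    (h : ∀ i : Fin t, f i.castSucc < f i.succ) (i : Fin (t + 1)) : f 0 + i ≤ f i := by
  induction i using Fin.induction with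
  | zero => simp
  | succ i ih => have := h i; simp only [Fin.val_succ, Fin.val_castSucc] at *; omega

theorem Fin.eq_add_of_forall_succ_eq {t : ℕ} {f : Fin (t + 1) → ℕ}
    (h : ∀ i : Fin t, f i.succ = f i.castSucc + 1) (i : Fin (t + 1)) : f i = f 0 + i := by
  induction i using Fin.induction with
  | zero => simp
  | succ i ih => have := h i; simp only [Fin.val_succ, Fin.val_castSucc] at *; omega

theorem Omega_eq_cardFactors (n : ℕ) : Omega n = Ω n := rfl

namespace Subgroup

variable {G : Type*} [Group G]

theorem map_mk'_sup_zpowers (A : Subgroup G) [A.Normal] (g : G) :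
    (A ⊔ zpowers g).map (QuotientGroup.mk' A) = zpowers (g : G ⧸ A) := by
  rw [map_sup, QuotientGroup.map_mk'_self, bot_sup_eq, MonoidHom.map_zpowers]
  rfl

theorem commutator_sup_zpowers_le (A : Subgroup G) [A.Normal] (g : G) :
    ⁅A ⊔ zpowers g, A ⊔ zpowers g⁆ ≤ A := by
  rw [commutator_le]
  intro b hb x hx
  have hmem {y : G} (hy : y ∈ A ⊔ zpowers g) : (y : G ⧸ A) ∈ zpowers (g : G ⧸ A) :=
    map_mk'_sup_zpowers A g ▸ mem_map_of_mem _ hy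
  obtain ⟨k, hk⟩ := mem_zpowers_iff.mp (hmem hb)
  obtain ⟨l, hl⟩ := mem_zpowers_iff.mp (hmem hx)
  rw [← QuotientGroup.eq_one_iff, ← QuotientGroup.mk'_apply, map_commutatorElement,
    QuotientGroup.mk'_apply, QuotientGroup.mk'_apply, commutatorElement_eq_one_iff_commute,
    ← hk, ← hl]
  exact Commute.zpow_zpow_self _ k l

theorem exists_mem_zpow_inv_mul_mem {A K : Subgroup G} [A.Normal] {g : G}
    (hK : K ≤ A ⊔ zpowers g) :
    ∃ h ∈ K, ∀ x ∈ K, ∃ m : ℤ, (h ^ m)⁻¹ * x ∈ A := by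
  have : IsCyclic (K.map (QuotientGroup.mk' A)) :=
    isCyclic_of_le ((map_mono hK).trans (map_mk'_sup_zpowers A g).le)
  obtain ⟨⟨_, h, hK, rfl⟩, hgen⟩ :=
    IsCyclic.exists_generator (α := K.map (QuotientGroup.mk' A))
  refine ⟨h, hK, fun x hx => ?_⟩
  obtain ⟨m, hm⟩ := mem_zpowers_iff.mp (hgen ⟨_, mem_map_of_mem _ hx⟩)
  refine ⟨m, (QuotientGroup.eq_one_iff _).mp ?_⟩
  have hm' : (h : G ⧸ A) ^ m = x := congrArg Subtype.val hm
  rw [QuotientGroup.mk_mul, QuotientGroup.mk_inv, QuotientGroup.mk_zpow, hm', inv_mul_cancel]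

theorem normal_of_le_normal_of_isCyclic {C D : Subgroup G} [C.Normal] [IsCyclic C] (hDC : D ≤ C) :
    D.Normal where
  conj_mem x hx y := by
    -- conjugation by `y` restricts to an endomorphism of the cyclic group `C`: a power map
    obtain ⟨m, hm⟩ := (MulAut.conjNormal y : MulAut C).toMonoidHom.map_cyclic
    have hconj : y * x * y⁻¹ = x ^ m := by
      simpa using congrArg Subtype.val (hm ⟨x, hDC hx⟩)
    rw [hconj]
    exact zpow_mem hx m

theorem isComplement'_of_disjoint_of_sup_eq_top {H K : Subgroup G} [K.Normal]
    (hdisj : Disjoint H K) (hsup : H ⊔ K = ⊤) : IsComplement' H K :=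
  isComplement'_of_disjoint_and_mul_eq_univ hdisj (by rw [← mul_normal, hsup, coe_top])

theorem isCoatom_map_of_ker_le {N : Type*} [Group N] {f : G →* N} (hf : Function.Surjective f)
    {M : Subgroup G} (hker : f.ker ≤ M) (hM : IsCoatom M) : IsCoatom (M.map f) := by
  refine ⟨fun htop => hM.1 ?_, fun K hK => ?_⟩
  · rw [← comap_map_eq_self hker, htop, comap_top]
  · have hlt : M < K.comap f := by
      rwa [← comap_map_eq_self hker, comap_lt_comap_of_surjective hf]
    rw [← map_comap_eq_self_of_surjective hf K, hM.2 _ hlt, map_top_of_surjective f hf]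

theorem inf_normal_of_commutator_le {M A B : Subgroup G} [B.Normal] (hMB : M ⊔ B = ⊤)
    (hAM : A ≤ M) (hBA : ⁅B, B⁆ ≤ A) : (M ⊓ B).Normal where
  conj_mem n hn y := by
    obtain ⟨m, hm, b, hb, rfl⟩ := mem_sup_of_normal_right.mp (hMB ▸ mem_top y)
    have hbn : b * n * b⁻¹ ∈ M ⊓ B := by
      refine mem_inf.mpr ⟨?_, Normal.conj_mem inferInstance n hn.2 b⟩
      have hcomm : ⁅b, n⁆ ∈ M := hAM (hBA (commutator_mem_commutator hb hn.2))
      simpa [commutatorElement_def] using mul_mem hcomm hn.1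
    have : m * b * n * (m * b)⁻¹ = m * (b * n * b⁻¹) * m⁻¹ := by group
    rw [this]
    exact mem_inf.mpr
      ⟨mul_mem (mul_mem hm hbn.1) (inv_mem hm), Normal.conj_mem inferInstance _ hbn.2 m⟩

theorem index_prime_of_isCoatom_of_disjoint_normal_cyclic [Finite G] {M C : Subgroup G}
    [C.Normal] [IsCyclic C] (hM : IsCoatom M) (hMC : Disjoint M C) (hC : C ≠ ⊥) :
    M.index.Prime := by
  have hp : (Nat.card C).minFac.Prime := Nat.minFac_prime (mt card_eq_one.mp hC)
  have := Fact.mk hp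
  obtain ⟨x, hx⟩ := exists_prime_orderOf_dvd_card' (G := C) _ (Nat.minFac_dvd _)
  set D := zpowers (x : G)
  have hDC : D ≤ C := zpowers_le.mpr x.2
  have : D.Normal := normal_of_le_normal_of_isCyclic hDC
  have hMD : Disjoint M D := hMC.mono_right hDC
  have hD : D ≠ ⊥ := by
    rw [Ne, zpowers_eq_bot, ← orderOf_eq_one_iff, orderOf_coe, hx]
    exact hp.one_lt.ne'
  have hsup : M ⊔ D = ⊤ := hM.2 _ (left_lt_sup.mpr fun hDM => hD (hMD.symm.eq_bot_of_le hDM))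
  rw [(isComplement'_of_disjoint_of_sup_eq_top hMD hsup).symm.index_eq_card, Nat.card_zpowers,
    orderOf_coe, hx]
  exact hp

theorem index_prime_of_isCoatom_of_sup_zpowers [Finite G] {M A B : Subgroup G} [A.Normal]
    [B.Normal] {g : G} (hM : IsCoatom M) (hAM : A ≤ M) (hB : B = A ⊔ zpowers g)
    (hBM : ¬B ≤ M) : M.index.Prime := by
  have hMB : M ⊔ B = ⊤ := hM.2 _ (left_lt_sup.mpr hBM)
  set N := M ⊓ B
  have : N.Normal := inf_normal_of_commutator_le hMB hAM (hB ▸ commutator_sup_zpowers_le A g)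
  set π := QuotientGroup.mk' N
  have hπ : Function.Surjective π := QuotientGroup.mk'_surjective N
  have hNM : π.ker ≤ M := (QuotientGroup.ker_mk' N).trans_le inf_le_left
  have hAN : A ≤ π.ker := (QuotientGroup.ker_mk' N).symm ▸ le_inf hAM (hB ▸ le_sup_left)
  have hBπ : B.map π = zpowers (π g) := by
    rw [hB, map_sup, MonoidHom.map_zpowers, (map_eq_bot_iff _).mpr hAN, bot_sup_eq]
  have : IsCyclic (B.map π) := hBπ ▸ inferInstance
  have : (B.map π).Normal := Normal.map inferInstance π hπ
  rw [← index_map_eq _ hπ hNM]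
  refine index_prime_of_isCoatom_of_disjoint_normal_cyclic (C := B.map π)
    (isCoatom_map_of_ker_le hπ hNM hM) ?_ fun hbot => hBM ?_
  · rw [disjoint_iff, ← map_comap_eq_self_of_surjective hπ (_ ⊓ _), comap_inf,
      QuotientGroup.comap_map_mk', QuotientGroup.comap_map_mk', sup_of_le_right inf_le_left,
      sup_of_le_right inf_le_right, QuotientGroup.map_mk'_self]
  · rw [map_eq_bot_iff, QuotientGroup.ker_mk'] at hbot
    exact hbot.trans inf_le_left

theorem cardFactors_index_eq_add {H K : Subgroup G} (hHK : H ≤ K) (hH : H.index ≠ 0) :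
    Ω H.index = Ω (H.relIndex K) + Ω K.index := by
  rw [← relIndex_mul_index hHK] at hH ⊢
  exact cardFactors_mul (left_ne_zero_of_mul hH) (right_ne_zero_of_mul hH)

theorem isCoatom_subgroupOf_of_covBy {H K : Subgroup G} (h : H ⋖ K) : IsCoatom (H.subgroupOf K) :=
  (OrderIso.isCoatom_iff (α := Set.Iic K) (MapSubtype.orderIso K).symm ⟨H, h.le⟩).mpr
    ((covBy_iff_coatom_Iic h.le).mp h)

theorem cardFactors_index_lt_of_lt [Finite G] {H K : Subgroup G} (h : H < K) :
    Ω K.index < Ω H.index := by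
  have hrel0 : H.relIndex K ≠ 0 := index_ne_zero_of_finite
  have hrel1 : H.relIndex K ≠ 1 := mt relIndex_eq_one.mp h.not_ge
  have hrel : 1 < H.relIndex K := by omega
  rw [cardFactors_index_eq_add h.le index_ne_zero_of_finite]
  linarith [cardFactors_pos_iff_one_lt.mpr hrel]

theorem length_le_cardFactors_card [Finite G] {t : ℕ} {s : Fin (t + 1) → Subgroup G}
    (h0 : s 0 = ⊤) (hlast : s (Fin.last t) = ⊥) (hs : ∀ i : Fin t, s i.succ < s i.castSucc) :
    t ≤ Ω (Nat.card G) := by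
  have := Fin.add_le_of_forall_lt_succ (f := fun i => Ω (s i).index)
    (fun i => cardFactors_index_lt_of_lt (hs i)) (Fin.last t)
  simpa [h0, hlast] using this

end Subgroup

theorem exists_isUnrefinableChain (G : Type*) [Group G] [Finite G] :
    ∃ (t : ℕ) (s : Fin (t + 1) → Subgroup G), IsUnrefinableChain s := by
  obtain ⟨a, ha0, t, hat, hcov⟩ :=
    exists_covBy_seq_of_wellFoundedLT_wellFoundedGT_of_le (bot_le : (⊥ : Subgroup G) ≤ ⊤)
  refine ⟨t, fun i => a (Fin.rev i), by simpa using hat, by simpa using ha0, fun i => ?_⟩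
  have := hcov (t - (i + 1)) (by omega)
  convert this using 2 <;> simp only [Fin.val_rev, Fin.val_succ, Fin.val_castSucc] <;> omega

namespace IsSupersolvable

variable {G : Type*} [Group G]

theorem subgroup (hG : IsSupersolvable G) (H : Subgroup G) : IsSupersolvable H := by
  obtain ⟨n, s, h0, hlast, hnormal, hstep⟩ := hG
  refine ⟨n, fun i => (s i).subgroupOf H, by simp [h0], by simp [hlast],
    fun i => (hnormal i).subgroupOf H, fun i => ?_⟩
  obtain ⟨hle, g, hg⟩ := hstep i
  have := hnormal i.castSucc
  obtain ⟨h, ⟨hhs, hhH⟩, hgen⟩ :=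
    Subgroup.exists_mem_zpow_inv_mul_mem (K := s i.succ ⊓ H) (inf_le_left.trans hg.le)
  refine ⟨Subgroup.subgroupOf_mono H hle, ⟨h, hhH⟩, le_antisymm (fun x hx => ?_)
    (sup_le (Subgroup.subgroupOf_mono H hle) (Subgroup.zpowers_le.mpr hhs))⟩
  obtain ⟨m, hm⟩ := hgen x ⟨hx, x.2⟩
  have hx' : x = ⟨h, hhH⟩ ^ m * ((⟨h, hhH⟩ ^ m)⁻¹ * x) := by group
  rw [hx']
  exact mul_mem (Subgroup.mem_sup_right (Subgroup.zpow_mem_zpowers _ m))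
    (Subgroup.mem_sup_left hm)

theorem index_prime_of_isCoatom [Finite G] (hG : IsSupersolvable G) {M : Subgroup G}
    (hM : IsCoatom M) : M.index.Prime := by
  obtain ⟨n, s, h0, hlast, hnormal, hstep⟩ := hG
  obtain ⟨i, hAM, hBM⟩ := Fin.exists_castSucc_and_not_succ (P := (s · ≤ M)) (h0 ▸ bot_le)
    (hlast ▸ fun h => hM.1 (top_le_iff.mp h))
  obtain ⟨-, g, hg⟩ := hstep i
  have := hnormal i.castSucc
  have := hnormal i.succ
  exact Subgroup.index_prime_of_isCoatom_of_sup_zpowers hM hAM hg hBM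

theorem cardFactors_index_of_covBy [Finite G] (hG : IsSupersolvable G) {H K : Subgroup G}
    (h : H ⋖ K) : Ω H.index = Ω K.index + 1 := by
  rw [Subgroup.cardFactors_index_eq_add h.le Subgroup.index_ne_zero_of_finite, add_comm,
    cardFactors_apply_prime (p := H.relIndex K)
      ((hG.subgroup K).index_prime_of_isCoatom (Subgroup.isCoatom_subgroupOf_of_covBy h))]

theorem length_eq_cardFactors_card [Finite G] (hG : IsSupersolvable G) {t : ℕ}
    {s : Fin (t + 1) → Subgroup G} (hs : IsUnrefinableChain s) : t = Ω (Nat.card G) := by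
  obtain ⟨h0, hlast, hcov⟩ := hs
  have := Fin.eq_add_of_forall_succ_eq (f := fun i => Ω (s i).index)
    (fun i => hG.cardFactors_index_of_covBy (hcov i)) (Fin.last t)
  simpa [h0, hlast] using this.symm

end IsSupersolvable

theorem iwasawa_supersolvable (G : Type*) [Group G] [Finite G]
    (hss : IsSupersolvable G) :
    groupDepth G = groupLength G ∧
    (∀ (t : ℕ) (s : Fin (t + 1) → Subgroup G), IsUnrefinableChain s →
      t = Omega (Nat.card G)) ∧
    (∀ M : Subgroup G, M ⋖ ⊤ → M.index.Prime) ∧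
    groupDepth G = Omega (Nat.card G) := by
  simp only [Omega_eq_cardFactors]
  have hchain (t : ℕ) (s : Fin (t + 1) → Subgroup G) (hs : IsUnrefinableChain s) :
      t = Ω (Nat.card G) :=
    hss.length_eq_cardFactors_card hs
  obtain ⟨t, s, hs⟩ := exists_isUnrefinableChain G
  obtain rfl := hchain t s hs
  have hdepth : groupDepth G = Ω (Nat.card G) := by
    have hlengths :
        {t | ∃ s : Fin (t + 1) → Subgroup G, IsUnrefinableChain s} = {Ω (Nat.card G)} :=
      Set.eq_singleton_iff_unique_mem.mpr ⟨⟨s, hs⟩, fun t ⟨s, hs⟩ => hchain t s hs⟩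
    rw [groupDepth, hlengths, csInf_singleton]
  have hlength : groupLength G = Ω (Nat.card G) :=
    IsGreatest.csSup_eq ⟨⟨s, hs.1, hs.2.1, fun i => (hs.2.2 i).lt⟩,
      by rintro _ ⟨_, h0, hlast, hlt⟩; exact Subgroup.length_le_cardFactors_card h0 hlast hlt⟩
  exact ⟨hdepth.trans hlength.symm, hchain,
    fun M hM => hss.index_prime_of_isCoatom (covBy_top_iff.mp hM), hdepth⟩
end
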